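/- Let G = C_n(S) be a circulant graph with S̄ = {1,…,⌊n/2⌋} \ S. Let 𝒯_e be the set of triples {0, a, b} ⊆ ℤ/nℤ that are independent in G and satisfy |a|_n = |b|_n = |b−a|_n ∈ S̄. Then |𝒯_e| = 1 if n = 3k with k ∈ S̄, and |𝒯_e| = 0 otherwise. -/
import Mathlib


/-- The "reduced absolute value" |x|_n = min(x mod n, n - x mod n). -/
def redAbs (n : ℕ) (x : ZMod n) : ℕ := min x.val (n - x.val)

/-- The circulant graph C_n(S). -/
def circulant (n : ℕ) (S : Finset ℕ) : SimpleGraph (ZMod n) :=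
  SimpleGraph.fromRel (fun i j => redAbs n (j - i) ∈ S)

/-- `s` is an independent set of C_n(S). -/
def IsIndep {n : ℕ} (S : Finset ℕ) (s : Finset (ZMod n)) : Prop :=
  ∀ x ∈ s, ∀ y ∈ s, x ≠ y → ¬ (circulant n S).Adj x y

/-- `s` is a maximal independent set of C_n(S). -/
def IsMaxIndep {n : ℕ} (S : Finset ℕ) (s : Finset (ZMod n)) : Prop :=
  IsIndep S s ∧ ∀ t : Finset (ZMod n), IsIndep S t → s ⊆ t → t = s

/-- The complement generating set S̄ = {1,…,⌊n/2⌋} \ S. -/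
def Sbar (n : ℕ) (S : Finset ℕ) : Finset ℕ := Finset.Icc 1 (n / 2) \ S

lemma val_of_redAbs {n : ℕ} [NeZero n] {x : ZMod n} {m : ℕ} (h : redAbs n x = m) :
    x.val = m ∨ x.val = n - m := by
  have := ZMod.val_lt x
  unfold redAbs at h
  omega

lemma redAbs_neg (n : ℕ) [NeZero n] (x : ZMod n) : redAbs n (-x) = redAbs n x := by
  by_cases hx : x = 0
  · simp [hx]
  · haveI : NeZero x := ⟨hx⟩
    unfold redAbs
    rw [ZMod.val_neg_of_ne_zero]
    have := ZMod.val_lt x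
    have : 0 < x.val := ZMod.val_pos.mpr hx
    omega

lemma card_pair_le {α : Type*} [DecidableEq α] (x y : α) : ({x, y} : Finset α).card ≤ 2 :=
  le_trans (Finset.card_insert_le _ _) (by simp)

lemma char_forward {n : ℕ} {S : Finset ℕ} {F : Finset (ZMod n)}
    (h : F.card = 3 ∧ IsIndep S F ∧ ∃ a b : ZMod n, F = {0, a, b} ∧
      redAbs n a = redAbs n b ∧ redAbs n b = redAbs n (b - a) ∧ redAbs n a ∈ Sbar n S) :
    ∃ k : ℕ, n = 3 * k ∧ k ∈ Sbar n S ∧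
      F = {0, ((k : ℕ) : ZMod n), ((2 * k : ℕ) : ZMod n)} := by
  obtain ⟨hcard, -, a, b, hFab, hab1, hab2, hmem⟩ := h
  set m := redAbs n a with hm
  obtain ⟨hm1, hmS⟩ := Finset.mem_sdiff.mp hmem
  rw [Finset.mem_Icc] at hm1
  haveI : NeZero n := ⟨by omega⟩
  have hcard' := hcard
  rw [hFab] at hcard'
  -- distinctness
  have hab : a ≠ b := by
    rintro rfl
    have hsub : ({0, a, a} : Finset (ZMod n)) ⊆ {0, a} := by
      intro z hz; simp at hz ⊢; tauto
    have := le_trans (Finset.card_le_card hsub) (card_pair_le 0 a)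
    omega
  have ha0 : a ≠ 0 := by
    rintro rfl
    have hsub : ({0, (0 : ZMod n), b} : Finset (ZMod n)) ⊆ {0, b} := by
      intro z hz; simp at hz ⊢; tauto
    have := le_trans (Finset.card_le_card hsub) (card_pair_le 0 b)
    omega
  have hb0 : b ≠ 0 := by
    rintro rfl
    have hsub : ({0, a, (0 : ZMod n)} : Finset (ZMod n)) ⊆ {0, a} := by
      intro z hz; simp at hz ⊢; tauto
    have := le_trans (Finset.card_le_card hsub) (card_pair_le 0 a)
    omega
  have hne : a.val ≠ b.val := fun h => hab (ZMod.val_injective n h)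
  have hva := val_of_redAbs hm.symm
  have hvb : b.val = m ∨ b.val = n - m := val_of_redAbs hab1.symm
  have hvba : (b - a).val = m ∨ (b - a).val = n - m :=
    val_of_redAbs (by rw [← hab2]; exact hab1.symm)
  have hva' := ZMod.val_lt a
  have hvb' := ZMod.val_lt b
  have h2m : 2 * m < n := by omega
  rcases hva with hva | hva
  · -- a.val = m, b.val = n - m
    have hble : a.val ≤ b.val := by omega
    have hsub : (b - a).val = b.val - a.val := ZMod.val_sub hble
    have h3 : n = 3 * m := by omega
    refine ⟨m, h3, hmem, ?_⟩
    rw [hFab]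
    have hak : a = ((m : ℕ) : ZMod n) :=
      ZMod.val_injective n (by rw [hva, ZMod.val_cast_of_lt (by omega)])
    have hbk : b = ((2 * m : ℕ) : ZMod n) :=
      ZMod.val_injective n (by rw [hvb.resolve_left (by omega),
        ZMod.val_cast_of_lt (by omega)]; omega)
    rw [hak, hbk]
  · -- a.val = n - m, b.val = m
    have hble : b.val ≤ a.val := by omega
    have hsub : (a - b).val = a.val - b.val := ZMod.val_sub hble
    have hvab : (a - b).val = m ∨ (a - b).val = n - m := by
      have hneg : redAbs n (a - b) = m := by
        rw [← redAbs_neg, neg_sub, ← hab2]; exact hab1.symm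
      exact val_of_redAbs hneg
    have h3 : n = 3 * m := by omega
    refine ⟨m, h3, hmem, ?_⟩
    rw [hFab]
    have hak : a = ((2 * m : ℕ) : ZMod n) :=
      ZMod.val_injective n (by rw [hva, ZMod.val_cast_of_lt (by omega)]; omega)
    have hbk : b = ((m : ℕ) : ZMod n) :=
      ZMod.val_injective n (by rw [hvb.resolve_right (by omega),
        ZMod.val_cast_of_lt (by omega)])
    rw [hak, hbk, Finset.pair_comm]

lemma char_backward {n : ℕ} {S : Finset ℕ} {k : ℕ} (hn : n = 3 * k) (hk : k ∈ Sbar n S) :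
    (({0, ((k : ℕ) : ZMod n), ((2 * k : ℕ) : ZMod n)} : Finset (ZMod n)).card = 3 ∧
      IsIndep S {0, ((k : ℕ) : ZMod n), ((2 * k : ℕ) : ZMod n)} ∧
      ∃ a b : ZMod n, ({0, ((k : ℕ) : ZMod n), ((2 * k : ℕ) : ZMod n)} : Finset (ZMod n))
          = {0, a, b} ∧
        redAbs n a = redAbs n b ∧ redAbs n b = redAbs n (b - a) ∧ redAbs n a ∈ Sbar n S) := by
  obtain ⟨hk1, hkS⟩ := Finset.mem_sdiff.mp hk
  rw [Finset.mem_Icc] at hk1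
  haveI : NeZero n := ⟨by omega⟩
  have vk : ((k : ℕ) : ZMod n).val = k := ZMod.val_cast_of_lt (by omega)
  have v2k : ((2 * k : ℕ) : ZMod n).val = 2 * k := ZMod.val_cast_of_lt (by omega)
  have rk : redAbs n ((k : ℕ) : ZMod n) = k := by unfold redAbs; rw [vk]; omega
  have r2k : redAbs n ((2 * k : ℕ) : ZMod n) = k := by unfold redAbs; rw [v2k]; omega
  have ne1 : (0 : ZMod n) ≠ ((k : ℕ) : ZMod n) := by
    intro h; have := congrArg ZMod.val h; rw [ZMod.val_zero, vk] at this; omega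
  have ne2 : (0 : ZMod n) ≠ ((2 * k : ℕ) : ZMod n) := by
    intro h; have := congrArg ZMod.val h; rw [ZMod.val_zero, v2k] at this; omega
  have ne3 : ((k : ℕ) : ZMod n) ≠ ((2 * k : ℕ) : ZMod n) := by
    intro h; have := congrArg ZMod.val h; rw [vk, v2k] at this; omega
  have h3 : ((3 * k : ℕ) : ZMod n) = 0 := by rw [← hn, ZMod.natCast_self]
  have h3' : (3 : ZMod n) * ((k : ℕ) : ZMod n) = 0 := by push_cast at h3; linear_combination h3
  have key : ∀ u ∈ ({0, ((k : ℕ) : ZMod n), ((2 * k : ℕ) : ZMod n)} : Finset (ZMod n)),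
      ∀ v ∈ ({0, ((k : ℕ) : ZMod n), ((2 * k : ℕ) : ZMod n)} : Finset (ZMod n)),
      u ≠ v → redAbs n (v - u) = k := by
    intro u hu v hv huv
    simp only [Finset.mem_insert, Finset.mem_singleton] at hu hv
    rcases hu with rfl | rfl | rfl <;> rcases hv with rfl | rfl | rfl
    · exact absurd rfl huv
    · rw [sub_zero]; exact rk
    · rw [sub_zero]; exact r2k
    · rw [show (0 : ZMod n) - ((k : ℕ) : ZMod n) = ((2 * k : ℕ) : ZMod n) by
        push_cast; linear_combination -h3']; exact r2k
    · exact absurd rfl huv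
    · rw [show ((2 * k : ℕ) : ZMod n) - ((k : ℕ) : ZMod n) = ((k : ℕ) : ZMod n) by
        push_cast; ring]; exact rk
    · rw [show (0 : ZMod n) - ((2 * k : ℕ) : ZMod n) = ((k : ℕ) : ZMod n) by
        push_cast; linear_combination -h3']; exact rk
    · rw [show ((k : ℕ) : ZMod n) - ((2 * k : ℕ) : ZMod n) = ((2 * k : ℕ) : ZMod n) by
        push_cast; linear_combination -h3']; exact r2k
    · exact absurd rfl huv
  refine ⟨?_, ?_, ((k : ℕ) : ZMod n), ((2 * k : ℕ) : ZMod n), rfl, ?_, ?_, ?_⟩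
  · rw [Finset.card_insert_of_notMem (by
        simp only [Finset.mem_insert, Finset.mem_singleton]; tauto),
      Finset.card_insert_of_notMem (by
        simp only [Finset.mem_singleton]; exact ne3), Finset.card_singleton]
  · intro x hx y hy hxy hadj
    rw [circulant, SimpleGraph.fromRel_adj] at hadj
    obtain ⟨-, hr | hr⟩ := hadj
    · rw [key x hx y hy hxy] at hr; exact hkS hr
    · rw [key y hy x hx hxy.symm] at hr; exact hkS hr
  · rw [rk, r2k]
  · rw [r2k, show ((2 * k : ℕ) : ZMod n) - ((k : ℕ) : ZMod n) = ((k : ℕ) : ZMod n) by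
      push_cast; ring, rk]
  · rw [rk]; exact hk

theorem card_Te (n : ℕ) (S : Finset ℕ) :
    ((∃ k : ℕ, n = 3 * k ∧ k ∈ Sbar n S) →
      Set.ncard {F : Finset (ZMod n) | F.card = 3 ∧ IsIndep S F ∧
        ∃ a b : ZMod n, F = {0, a, b} ∧ redAbs n a = redAbs n b ∧
          redAbs n b = redAbs n (b - a) ∧ redAbs n a ∈ Sbar n S} = 1) ∧
    (¬ (∃ k : ℕ, n = 3 * k ∧ k ∈ Sbar n S) →
      Set.ncard {F : Finset (ZMod n) | F.card = 3 ∧ IsIndep S F ∧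
        ∃ a b : ZMod n, F = {0, a, b} ∧ redAbs n a = redAbs n b ∧
          redAbs n b = redAbs n (b - a) ∧ redAbs n a ∈ Sbar n S} = 0) := by
  constructor
  · rintro ⟨k, hn, hk⟩
    have hset : {F : Finset (ZMod n) | F.card = 3 ∧ IsIndep S F ∧
        ∃ a b : ZMod n, F = {0, a, b} ∧ redAbs n a = redAbs n b ∧
          redAbs n b = redAbs n (b - a) ∧ redAbs n a ∈ Sbar n S} =
        {({0, ((k : ℕ) : ZMod n), ((2 * k : ℕ) : ZMod n)} : Finset (ZMod n))} := by
      ext F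
      simp only [Set.mem_setOf_eq, Set.mem_singleton_iff]
      constructor
      · intro h
        obtain ⟨k', h1, _, h3⟩ := char_forward h
        have : k' = k := by omega
        rw [h3, this]
      · rintro rfl
        exact char_backward hn hk
    rw [hset, Set.ncard_singleton]
  · intro hno
    have hset : {F : Finset (ZMod n) | F.card = 3 ∧ IsIndep S F ∧
        ∃ a b : ZMod n, F = {0, a, b} ∧ redAbs n a = redAbs n b ∧
          redAbs n b = redAbs n (b - a) ∧ redAbs n a ∈ Sbar n S} = ∅ := by
      rw [Set.eq_empty_iff_forall_notMem]
      intro F hF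
      obtain ⟨k', h1, h2, -⟩ := char_forward hF
      exact hno ⟨k', h1, h2⟩
    rw [hset, Set.ncard_empty]
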